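/- Assume condition (G). For every λ ∈ (0, λ₁) and every μ ∈ (0, μ⁰_λ) (with μ⁰_λ the threshold for which the Nehari decomposition holds), one has inf{I_{λ,μ}(v) : v ∈ N_{λ,μ}} > −∞. -/

import Mathlib

open MeasureTheory Set Filter Topology RealInnerProductSpace

noncomputable section

/-- Euclidean space `ℝ^N`. -/
abbrev Euc (N : ℕ) := EuclideanSpace ℝ (Fin N)

/-- The critical Sobolev exponent `2* = 2N/(N-2)`. -/
def critExp (N : ℕ) : ℝ := 2 * N / ((N : ℝ) - 2)

/-- The (classical) Laplacian of a function `u : ℝ^N → ℝ`. -/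
def lap (N : ℕ) (u : Euc N → ℝ) (x : Euc N) : ℝ :=
  ∑ i : Fin N,
    fderiv ℝ (fun y => fderiv ℝ u y (EuclideanSpace.single i 1)) x (EuclideanSpace.single i 1)

/-- `Ω` has a smooth boundary: it is the sublevel set of a smooth function whose
differential does not vanish on the boundary. -/
def SmoothBoundary (N : ℕ) (Ω : Set (Euc N)) : Prop :=
  ∃ f : Euc N → ℝ, ContDiff ℝ (⊤ : ℕ∞) f ∧ Ω = {x | f x < 0} ∧
    ∀ x ∈ frontier Ω, fderiv ℝ f x ≠ 0

/-- `Ω` is a bounded (smooth) domain. -/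
def DomainOK (N : ℕ) (Ω : Set (Euc N)) : Prop :=
  IsOpen Ω ∧ IsConnected Ω ∧ Bornology.IsBounded Ω ∧ SmoothBoundary N Ω

/-- Condition (G): `g ≥ 0` and `g ≢ 0` on `∂Ω`. -/
def condG (N : ℕ) (Ω : Set (Euc N)) (g : Euc N → ℝ) : Prop :=
  (∀ x ∈ frontier Ω, 0 ≤ g x) ∧ ¬ (∀ x ∈ frontier Ω, g x = 0)

/-- Condition (D): the closed annulus `cl(B_{1/δ}) \ B_δ` is contained in `Ω`
and `B_{δ/2} ∩ Ω = ∅`. -/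
def condD (N : ℕ) (Ω : Set (Euc N)) (δ : ℝ) : Prop :=
  Metric.closedBall (0 : Euc N) (1 / δ) \ Metric.ball (0 : Euc N) δ ⊆ Ω ∧
  Metric.ball (0 : Euc N) (δ / 2) ∩ Ω = ∅

/-- A model for `H¹₀(Ω)`: (continuously differentiable) functions vanishing outside `Ω`. -/
def H10 (N : ℕ) (Ω : Set (Euc N)) : Set (Euc N → ℝ) :=
  {u | ContDiff ℝ 1 u ∧ ∀ x ∉ Ω, u x = 0}

/-- Squared Dirichlet norm `∫_Ω |∇u|²`. -/
def dnormSq (N : ℕ) (Ω : Set (Euc N)) (u : Euc N → ℝ) : ℝ :=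
  ∫ x in Ω, ‖gradient u x‖ ^ 2

/-- The Dirichlet norm `(∫_Ω |∇u|²)^{1/2}` on `H¹₀(Ω)`. -/
def dnorm (N : ℕ) (Ω : Set (Euc N)) (u : Euc N → ℝ) : ℝ :=
  Real.sqrt (dnormSq N Ω u)

/-- The first eigenvalue of `-Δ` on `H¹₀(Ω)`, via the variational (Rayleigh quotient)
characterization. -/
def lambda1 (N : ℕ) (Ω : Set (Euc N)) : ℝ :=
  sInf {r : ℝ | ∃ u ∈ H10 N Ω, u ≠ 0 ∧ r = dnormSq N Ω u / ∫ x in Ω, (u x) ^ 2}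

/-- The best Sobolev constant `S = inf ∫_Ω|∇u|² / (∫_Ω|u|^{2*})^{2/2*}`. -/
def sobolevS (N : ℕ) (Ω : Set (Euc N)) : ℝ :=
  sInf {r : ℝ | ∃ u ∈ H10 N Ω, u ≠ 0 ∧
    r = dnormSq N Ω u / (∫ x in Ω, |u x| ^ critExp N) ^ (2 / critExp N)}

/-- A (positive, classical) solution of problem `(P_{λ,μ})`:
`-Δu = λu + u^{2*-1}` in `Ω`, `u > 0` in `Ω`, `u = μg` on `∂Ω`. -/
def IsSolP (N : ℕ) (Ω : Set (Euc N)) (g : Euc N → ℝ) (lam mu : ℝ) (u : Euc N → ℝ) : Prop :=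
  ContinuousOn u (closure Ω) ∧
  (∀ x ∈ Ω, -(lap N u x) = lam * u x + u x ^ (critExp N - 1)) ∧
  (∀ x ∈ Ω, 0 < u x) ∧
  (∀ x ∈ frontier Ω, u x = mu * g x)

/-- `φ` is the harmonic extension of `g`: `Δφ = 0` in `Ω`, `φ = g` on `∂Ω`. -/
def IsHarmonicExt (N : ℕ) (Ω : Set (Euc N)) (g φ : Euc N → ℝ) : Prop :=
  ContinuousOn φ (closure Ω) ∧ (∀ x ∈ Ω, lap N φ x = 0) ∧ ∀ x ∈ frontier Ω, φ x = g x

/-- A (positive, classical) solution of problem `(Q_{λ,μ})`: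
`-Δv = λ(v+μφ) + (v+μφ)^{2*-1}` in `Ω`, `v > 0` in `Ω`, `v = 0` on `∂Ω`. -/
def IsSolQ (N : ℕ) (Ω : Set (Euc N)) (φ : Euc N → ℝ) (lam mu : ℝ) (v : Euc N → ℝ) : Prop :=
  ContinuousOn v (closure Ω) ∧
  (∀ x ∈ Ω, -(lap N v x) = lam * (v x + mu * φ x) + (v x + mu * φ x) ^ (critExp N - 1)) ∧
  (∀ x ∈ Ω, 0 < v x) ∧
  (∀ x ∈ frontier Ω, v x = 0)

/-- The energy functional
`I_{λ,μ}(v) = ½∫_Ω|∇v|² - (λ/2)∫_Ω|v+μφ|² - (1/2*)∫_Ω|v+μφ|^{2*}`. -/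
def energy (N : ℕ) (Ω : Set (Euc N)) (φ : Euc N → ℝ) (lam mu : ℝ) (v : Euc N → ℝ) : ℝ :=
  (1 / 2) * dnormSq N Ω v - (lam / 2) * (∫ x in Ω, |v x + mu * φ x| ^ 2)
    - (1 / critExp N) * ∫ x in Ω, |v x + mu * φ x| ^ critExp N

/-- The derivative pairing `I′_{λ,μ}(v)w`. -/
def energyD (N : ℕ) (Ω : Set (Euc N)) (φ : Euc N → ℝ) (lam mu : ℝ) (v w : Euc N → ℝ) : ℝ :=
  (∫ x in Ω, (inner ℝ (gradient v x) (gradient w x) : ℝ))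
    - lam * (∫ x in Ω, (v x + mu * φ x) * w x)
    - ∫ x in Ω, |v x + mu * φ x| ^ (critExp N - 2) * (v x + mu * φ x) * w x

/-- The Nehari manifold `N_{λ,μ} = {v ∈ H¹₀(Ω) \ {0} : I′_{λ,μ}(v)v = 0}`. -/
def Nehari (N : ℕ) (Ω : Set (Euc N)) (φ : Euc N → ℝ) (lam mu : ℝ) : Set (Euc N → ℝ) :=
  {v | v ∈ H10 N Ω ∧ v ≠ 0 ∧ energyD N Ω φ lam mu v v = 0}

/-- The second derivative `T″_{λ,μ,v}(1)` of the fibering map `t ↦ I_{λ,μ}(tv)` at `t = 1`. -/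
def fiberSecond (N : ℕ) (Ω : Set (Euc N)) (φ : Euc N → ℝ) (lam mu : ℝ) (v : Euc N → ℝ) : ℝ :=
  dnormSq N Ω v - lam * (∫ x in Ω, (v x) ^ 2)
    - (critExp N - 1) * ∫ x in Ω, |v x + mu * φ x| ^ (critExp N - 2) * (v x) ^ 2

/-- `N⁺_{λ,μ}`: the part of the Nehari manifold where `T″_{λ,μ,v}(1) > 0`. -/
def NehariPlus (N : ℕ) (Ω : Set (Euc N)) (φ : Euc N → ℝ) (lam mu : ℝ) : Set (Euc N → ℝ) :=
  {v ∈ Nehari N Ω φ lam mu | 0 < fiberSecond N Ω φ lam mu v}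

/-- `N⁻_{λ,μ}`: the part of the Nehari manifold where `T″_{λ,μ,v}(1) < 0`. -/
def NehariMinus (N : ℕ) (Ω : Set (Euc N)) (φ : Euc N → ℝ) (lam mu : ℝ) : Set (Euc N → ℝ) :=
  {v ∈ Nehari N Ω φ lam mu | fiberSecond N Ω φ lam mu v < 0}

/-- `N⁰_{λ,μ}`: the part of the Nehari manifold where `T″_{λ,μ,v}(1) = 0`. -/
def NehariZero (N : ℕ) (Ω : Set (Euc N)) (φ : Euc N → ℝ) (lam mu : ℝ) : Set (Euc N → ℝ) :=
  {v ∈ Nehari N Ω φ lam mu | fiberSecond N Ω φ lam mu v = 0}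

/-- `m⁺_{λ,μ} = inf_{N⁺_{λ,μ}} I_{λ,μ}`. -/
def mPlus (N : ℕ) (Ω : Set (Euc N)) (φ : Euc N → ℝ) (lam mu : ℝ) : ℝ :=
  sInf (energy N Ω φ lam mu '' NehariPlus N Ω φ lam mu)

/-- `m⁻_{λ,μ} = inf_{N⁻_{λ,μ}} I_{λ,μ}`. -/
def mMinus (N : ℕ) (Ω : Set (Euc N)) (φ : Euc N → ℝ) (lam mu : ℝ) : ℝ :=
  sInf (energy N Ω φ lam mu '' NehariMinus N Ω φ lam mu)

lemma aux_pow_lin {q r ε : ℝ} (hr : 0 < r) (hrq : r < q) (hε : 0 < ε) {s : ℝ} (hs : 0 ≤ s) :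
    s ^ r ≤ ε * s ^ q + (1/ε) ^ (r/(q-r)) := by
  have hqr : 0 < q - r := sub_pos.2 hrq
  rcases le_or_gt s ((1/ε) ^ (1/(q-r))) with h | h
  · have h1 : s ^ r ≤ ((1/ε) ^ (1/(q-r))) ^ r := Real.rpow_le_rpow hs h hr.le
    have h2 : ((1/ε) ^ (1/(q-r))) ^ r = (1/ε) ^ (r/(q-r)) := by
      rw [← Real.rpow_mul (by positivity)]
      congr 1
      rw [div_mul_eq_mul_div, one_mul]
    rw [h2] at h1
    have h3 : 0 ≤ ε * s ^ q := by positivity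
    linarith
  · have hs0 : 0 < s := lt_of_le_of_lt (by positivity) h
    have h1 : (1/ε) < s ^ (q - r) := by
      have h0 := Real.rpow_lt_rpow (by positivity) h hqr
      rwa [← Real.rpow_mul (by positivity), one_div_mul_cancel hqr.ne', Real.rpow_one] at h0
    have h2 : s ^ q = s ^ r * s ^ (q - r) := by
      rw [← Real.rpow_add hs0]; ring_nf
    have h3 : 0 < s ^ r := Real.rpow_pos_of_pos hs0 r
    have h4 : 0 ≤ (1/ε) ^ (r/(q-r)) := by positivity
    have h5 : s ^ r ≤ ε * s ^ q := by
      rw [h2]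
      calc s ^ r = ε * (s ^ r * (1/ε)) := by field_simp
        _ ≤ ε * (s ^ r * s ^ (q-r)) := by
            refine mul_le_mul_of_nonneg_left ?_ hε.le
            exact mul_le_mul_of_nonneg_left h1.le h3.le
    linarith

set_option maxHeartbeats 1000000 in
/-- `I_{λ,μ}` is bounded below on the Nehari manifold `N_{λ,μ}`. -/
theorem energy_bddBelow_on_nehari
    (N : ℕ) (hN : 3 ≤ N) (Ω : Set (Euc N)) (hΩ : DomainOK N Ω)
    (g : Euc N → ℝ) (hgc : ContinuousOn g (frontier Ω)) (hG : condG N Ω g)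
    (φ : Euc N → ℝ) (hφ : IsHarmonicExt N Ω g φ)
    (lam : ℝ) (hlam0 : 0 < lam) (hlam1 : lam < lambda1 N Ω)
    (mu0 : ℝ) (hmu0pos : 0 < mu0)
    (hdecomp : ∀ mu : ℝ, 0 < mu → mu < mu0 → NehariZero N Ω φ lam mu = ∅)
    (mu : ℝ) (hmu0 : 0 < mu) (hmu1 : mu < mu0) :
    BddBelow (energy N Ω φ lam mu '' Nehari N Ω φ lam mu) := by
  classical
  obtain ⟨hopen, hconn, hbdd, hsmooth⟩ := hΩ
  have hmeasΩ : MeasurableSet Ω := hopen.measurableSet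
  haveI hfin : IsFiniteMeasure (volume.restrict Ω) :=
    ⟨by rw [Measure.restrict_apply_univ]; exact hbdd.measure_lt_top⟩
  set q : ℝ := critExp N with hqdef
  have hNr : (3:ℝ) ≤ (N:ℝ) := by exact_mod_cast hN
  have hq : 2 < q := by
    rw [hqdef, critExp, lt_div_iff₀ (by linarith)]
    linarith
  have hq0 : 0 < q := by linarith
  -- bound for φ on Ω
  have hclc : IsCompact (closure Ω) := hbdd.isCompact_closure
  obtain ⟨M0, hM0⟩ := hclc.exists_bound_of_continuousOn hφ.1
  set M : ℝ := |M0| + 1 with hMdef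
  have hM1 : 1 ≤ M := by rw [hMdef]; have := abs_nonneg M0; linarith
  have hM0' : 0 < M := by linarith
  have hMφ : ∀ x ∈ Ω, |φ x| ≤ M := by
    intro x hx
    have := hM0 x (subset_closure hx)
    rw [Real.norm_eq_abs] at this
    calc |φ x| ≤ M0 := this
      _ ≤ |M0| + 1 := by cases abs_cases M0 <;> linarith
  -- choice of ε and the constants
  set c : ℝ := 1/2 - 1/q with hcdef
  have hc : 0 < c := by
    have : 1/q < 1/2 := by
      rw [div_lt_div_iff₀ hq0 (by norm_num)]
      linarith
    simp only [hcdef]; linarith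
  set D : ℝ := M * (lam * mu + mu) / 2 with hDdef
  have hD0 : 0 < D := by
    have : 0 < lam * mu + mu := by positivity
    positivity
  set ε : ℝ := c / (D + 1) with hεdef
  have hε : 0 < ε := by positivity
  have hεkey : ε * D ≤ c := by
    rw [hεdef, div_mul_eq_mul_div, div_le_iff₀ (by linarith)]
    nlinarith
  set K₁ : ℝ := (1/ε) ^ ((1:ℝ)/(q-1)) with hK₁def
  set K₂ : ℝ := (1/ε) ^ ((q-1)/(q-(q-1))) with hK₂def
  have hK₁0 : 0 ≤ K₁ := Real.rpow_nonneg (by positivity) _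
  have hK₂0 : 0 ≤ K₂ := Real.rpow_nonneg (by positivity) _
  set vol : ℝ := (volume Ω).toReal with hvoldef
  have hvol0 : 0 ≤ vol := ENNReal.toReal_nonneg
  refine ⟨-((lam*mu/2) * (M*K₁*vol) + (mu/2) * (M*K₂*vol)), ?_⟩
  rintro y ⟨v, ⟨⟨hv1, hv0⟩, hvne, hNeq⟩, rfl⟩
  -- the function w = v + μφ and its bound on Ω
  have hvc : Continuous v := hv1.continuous
  obtain ⟨Mv0, hMv0⟩ := hclc.exists_bound_of_continuousOn hvc.continuousOn
  set w : Euc N → ℝ := fun x => v x + mu * φ x with hwdef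
  have hwx : ∀ x, v x + mu * φ x = w x := fun x => rfl
  set Mw : ℝ := |Mv0| + mu * M with hMwdef
  have hMw0 : 0 ≤ Mw := by positivity
  have hMw : ∀ x ∈ Ω, |w x| ≤ Mw := by
    intro x hx
    have h1 : |v x| ≤ |Mv0| := by
      have := hMv0 x (subset_closure hx)
      rw [Real.norm_eq_abs] at this
      cases abs_cases Mv0 <;> linarith
    have h2 : |φ x| ≤ M := hMφ x hx
    calc |w x| ≤ |v x| + |mu * φ x| := abs_add_le _ _
      _ = |v x| + mu * |φ x| := by rw [abs_mul, abs_of_pos hmu0]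
      _ ≤ |Mv0| + mu * M := by nlinarith
  -- measurability
  have hφm : AEStronglyMeasurable φ (volume.restrict Ω) :=
    (hφ.1.mono subset_closure).aestronglyMeasurable hmeasΩ
  have hvm : AEStronglyMeasurable v (volume.restrict Ω) := hvc.aestronglyMeasurable
  have hwm : AEStronglyMeasurable w (volume.restrict Ω) := hvm.add (hφm.const_mul mu)
  have hwabs : AEStronglyMeasurable (fun x => |w x|) (volume.restrict Ω) := by
    simpa [Real.norm_eq_abs] using hwm.norm
  have hpow : ∀ e : ℝ, 0 ≤ e →
      AEStronglyMeasurable (fun x => |w x| ^ e) (volume.restrict Ω) := fun e he =>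
    (Real.continuous_rpow_const he).comp_aestronglyMeasurable hwabs
  -- generic integrability criterion
  have intg : ∀ (f : Euc N → ℝ) (C : ℝ), AEStronglyMeasurable f (volume.restrict Ω) →
      (∀ x ∈ Ω, |f x| ≤ C) → IntegrableOn f Ω := by
    intro f C hm hb
    refine (integrable_const C).mono' hm ?_
    refine (ae_restrict_iff' hmeasΩ).2 (Filter.Eventually.of_forall fun x hx => ?_)
    simpa [Real.norm_eq_abs] using hb x hx
  -- the integrable pieces
  have hq2' : (0:ℝ) ≤ q - 2 := by linarith
  have iB : IntegrableOn (fun x => |w x| ^ q) Ω := by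
    refine intg _ (Mw ^ q) (hpow q hq0.le) fun x hx => ?_
    rw [abs_of_nonneg (Real.rpow_nonneg (abs_nonneg _) _)]
    exact Real.rpow_le_rpow (abs_nonneg _) (hMw x hx) hq0.le
  have iA : IntegrableOn (fun x => |w x| ^ (2:ℕ)) Ω := by
    refine intg _ (Mw ^ (2:ℕ)) ((continuous_pow 2).comp_aestronglyMeasurable hwabs) fun x hx => ?_
    rw [abs_of_nonneg (by positivity)]
    exact pow_le_pow_left₀ (abs_nonneg _) (hMw x hx) 2
  have iww : IntegrableOn (fun x => w x * w x) Ω := by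
    refine intg _ (Mw * Mw) (hwm.mul hwm) fun x hx => ?_
    rw [abs_mul]
    exact mul_le_mul (hMw x hx) (hMw x hx) (abs_nonneg _) hMw0
  have iwφ : IntegrableOn (fun x => w x * φ x) Ω := by
    refine intg _ (Mw * M) (hwm.mul hφm) fun x hx => ?_
    rw [abs_mul]
    exact mul_le_mul (hMw x hx) (hMφ x hx) (abs_nonneg _) hMw0
  have iqww : IntegrableOn (fun x => |w x| ^ (q-2) * w x * w x) Ω := by
    refine intg _ (Mw ^ (q-2) * Mw * Mw) (((hpow _ hq2').mul hwm).mul hwm) fun x hx => ?_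
    rw [abs_mul, abs_mul, abs_of_nonneg (Real.rpow_nonneg (abs_nonneg _) _)]
    have h1 : |w x| ^ (q-2) ≤ Mw ^ (q-2) :=
      Real.rpow_le_rpow (abs_nonneg _) (hMw x hx) hq2'
    have h2 := hMw x hx
    have h3 : (0:ℝ) ≤ |w x| ^ (q-2) := Real.rpow_nonneg (abs_nonneg _) _
    have h4 : (0:ℝ) ≤ Mw ^ (q-2) := Real.rpow_nonneg hMw0 _
    exact mul_le_mul (mul_le_mul h1 h2 (abs_nonneg _) h4) h2 (abs_nonneg _)
      (mul_nonneg h4 hMw0)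
  have iqwφ : IntegrableOn (fun x => |w x| ^ (q-2) * w x * φ x) Ω := by
    refine intg _ (Mw ^ (q-2) * Mw * M) (((hpow _ hq2').mul hwm).mul hφm) fun x hx => ?_
    rw [abs_mul, abs_mul, abs_of_nonneg (Real.rpow_nonneg (abs_nonneg _) _)]
    have h1 : |w x| ^ (q-2) ≤ Mw ^ (q-2) :=
      Real.rpow_le_rpow (abs_nonneg _) (hMw x hx) hq2'
    have h2 := hMw x hx
    have h2' := hMφ x hx
    have h3 : (0:ℝ) ≤ |w x| ^ (q-2) := Real.rpow_nonneg (abs_nonneg _) _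
    have h4 : (0:ℝ) ≤ Mw ^ (q-2) := Real.rpow_nonneg hMw0 _
    exact mul_le_mul (mul_le_mul h1 h2 (abs_nonneg _) h4) h2' (abs_nonneg _)
      (mul_nonneg h4 hMw0)
  -- pointwise algebraic identities
  have habs2 : ∀ a : ℝ, a * a = |a| ^ (2:ℕ) := by
    intro a; rw [sq_abs, sq]
  have hsplitq : ∀ a : ℝ, |a| ^ (q-2) * a * a = |a| ^ q := by
    intro a
    have h2 : |a| ^ ((2:ℕ):ℝ) = a * a := by
      rw [Real.rpow_natCast, sq_abs, sq]
    calc |a| ^ (q-2) * a * a = |a| ^ (q-2) * |a| ^ ((2:ℕ):ℝ) := by rw [h2]; ring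
      _ = |a| ^ (q - 2 + ((2:ℕ):ℝ)) := by
          rw [Real.rpow_add' (abs_nonneg a) (by push_cast; intro hcon; linarith)]
      _ = |a| ^ q := by norm_num
  have habs1 : ∀ a : ℝ, |a| ^ (q-2) * |a| = |a| ^ (q-1) := by
    intro a
    rw [show q - 1 = q - 2 + 1 by ring,
      Real.rpow_add' (abs_nonneg a) (by intro hcon; linarith), Real.rpow_one]
  -- the set integrals as named quantities
  set A : ℝ := ∫ x in Ω, |w x| ^ (2:ℕ) with hAdef
  set B : ℝ := ∫ x in Ω, |w x| ^ q with hBdef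
  set P : ℝ := ∫ x in Ω, w x * φ x with hPdef
  set Q : ℝ := ∫ x in Ω, |w x| ^ (q-2) * w x * φ x with hQdef
  have hB0 : 0 ≤ B := by
    rw [hBdef]
    exact setIntegral_nonneg hmeasΩ fun x _ => Real.rpow_nonneg (abs_nonneg _) _
  -- rewrite the two Nehari integrals
  have h1 : (∫ x in Ω, w x * v x) = A - mu * P := by
    have heq : (fun x => w x * v x) = fun x => |w x| ^ (2:ℕ) - mu * (w x * φ x) := by
      funext x
      rw [← habs2 (w x)]
      show w x * v x = w x * w x - mu * (w x * φ x)
      simp only [hwdef]; ring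
    rw [heq, integral_sub iA (iwφ.const_mul mu), integral_const_mul]
  have h2 : (∫ x in Ω, |w x| ^ (q-2) * w x * v x) = B - mu * Q := by
    have heq : (fun x => |w x| ^ (q-2) * w x * v x)
        = fun x => |w x| ^ q - mu * (|w x| ^ (q-2) * w x * φ x) := by
      funext x
      rw [← hsplitq (w x)]
      show |w x| ^ (q-2) * w x * v x
        = |w x| ^ (q-2) * w x * w x - mu * (|w x| ^ (q-2) * w x * φ x)
      simp only [hwdef]; ring
    rw [heq, integral_sub iB (iqwφ.const_mul mu), integral_const_mul]
  -- the Nehari constraint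
  have hD : dnormSq N Ω v = lam * (A - mu * P) + (B - mu * Q) := by
    have hNeq' := hNeq
    simp only [energyD, hwx] at hNeq'
    have hgrad : (∫ x in Ω, (inner ℝ (gradient v x) (gradient v x) : ℝ)) = dnormSq N Ω v := by
      rw [dnormSq]
      congr 1
      funext x
      exact real_inner_self_eq_norm_sq _
    rw [hgrad] at hNeq'
    have h1' : (∫ x in Ω, w x * v x) = A - mu * P := h1
    have h2' : (∫ x in Ω, |w x| ^ (q-2) * w x * v x) = B - mu * Q := h2
    rw [← hqdef] at hNeq'
    rw [h1', h2'] at hNeq'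
    linarith
  -- the energy on the Nehari manifold
  have henergy : energy N Ω φ lam mu v = c * B - (lam*mu/2) * P - (mu/2) * Q := by
    simp only [energy, hwx, ← hqdef]
    rw [hD, ← hAdef, ← hBdef, hcdef]
    ring
  -- bounds for P and Q
  have habsint : ∀ f : Euc N → ℝ, |∫ x in Ω, f x| ≤ ∫ x in Ω, |f x| := by
    intro f
    simpa [Real.norm_eq_abs] using norm_integral_le_integral_norm (μ := volume.restrict Ω) f
  have ibound : IntegrableOn (fun x => ε * M * |w x| ^ q + M * K₁) Ω := by
    exact ((iB.const_mul (ε * M)).add (integrable_const _))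
  have ibound2 : IntegrableOn (fun x => ε * M * |w x| ^ q + M * K₂) Ω := by
    exact ((iB.const_mul (ε * M)).add (integrable_const _))
  have hconstint : ∀ r : ℝ, (∫ x in Ω, (ε * M * |w x| ^ q + M * r))
      = ε * M * B + M * r * vol := by
    intro r
    rw [integral_add (iB.const_mul (ε * M)) (integrable_const _), integral_const_mul,
      setIntegral_const, smul_eq_mul, ← hBdef, measureReal_def, ← hvoldef]
    ring
  have hPb : |P| ≤ ε * M * B + M * K₁ * vol := by
    calc |P| ≤ ∫ x in Ω, |w x * φ x| := habsint _
      _ ≤ ∫ x in Ω, (ε * M * |w x| ^ q + M * K₁) := by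
          refine setIntegral_mono_on iwφ.abs ibound hmeasΩ fun x hx => ?_
          have key : |w x| ^ (1:ℝ) ≤ ε * |w x| ^ q + (1/ε) ^ ((1:ℝ)/(q-1)) :=
            aux_pow_lin one_pos (by linarith) hε (abs_nonneg _)
          rw [Real.rpow_one] at key
          have hφx := hMφ x hx
          have h3 : (0:ℝ) ≤ |w x| ^ q := Real.rpow_nonneg (abs_nonneg _) _
          rw [abs_mul, ← hK₁def] at *
          nlinarith [abs_nonneg (w x), abs_nonneg (φ x)]
      _ = ε * M * B + M * K₁ * vol := hconstint K₁
  have hQb : |Q| ≤ ε * M * B + M * K₂ * vol := by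
    calc |Q| ≤ ∫ x in Ω, |(|w x| ^ (q-2) * w x * φ x)| := habsint _
      _ ≤ ∫ x in Ω, (ε * M * |w x| ^ q + M * K₂) := by
          refine setIntegral_mono_on iqwφ.abs ibound2 hmeasΩ fun x hx => ?_
          have key : |w x| ^ (q-1) ≤ ε * |w x| ^ q + (1/ε) ^ ((q-1)/(q-(q-1))) :=
            aux_pow_lin (by linarith) (by linarith) hε (abs_nonneg _)
          rw [← hK₂def] at key
          have hφx := hMφ x hx
          have h3 : (0:ℝ) ≤ |w x| ^ q := Real.rpow_nonneg (abs_nonneg _) _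
          have h5 : |(|w x| ^ (q-2) * w x * φ x)| = |w x| ^ (q-1) * |φ x| := by
            rw [abs_mul, abs_mul, abs_of_nonneg (Real.rpow_nonneg (abs_nonneg _) _), habs1]
          rw [h5]
          have h6 : (0:ℝ) ≤ |w x| ^ (q-1) := Real.rpow_nonneg (abs_nonneg _) _
          nlinarith [abs_nonneg (φ x)]
      _ = ε * M * B + M * K₂ * vol := hconstint K₂
  -- conclude
  have hPlow : P ≤ ε * M * B + M * K₁ * vol := (le_abs_self P).trans hPb
  have hQlow : Q ≤ ε * M * B + M * K₂ * vol := (le_abs_self Q).trans hQb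
  have ha : (lam*mu/2) * P ≤ (lam*mu/2) * (ε * M * B + M * K₁ * vol) :=
    mul_le_mul_of_nonneg_left hPlow (by positivity)
  have hb : (mu/2) * Q ≤ (mu/2) * (ε * M * B + M * K₂ * vol) :=
    mul_le_mul_of_nonneg_left hQlow (by positivity)
  have hcB : 0 ≤ (c - ε * D) * B := mul_nonneg (by linarith) hB0
  rw [henergy]
  simp only [hDdef] at hcB
  clear_value A B P Q
  clear_value q c D ε K₁ K₂ vol M Mw
  nlinarith [hcB, ha, hb]
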